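/- arXiv:1709.01436 — 3 statements merged into one kernel-verified Lean document; each statement's English description precedes it below -/
import Mathlib

section
/- Let λ > 0, let (β_n)_{n≥0} satisfy 0 < β_n ≤ 1 for all n, and for n ≥ 0 let q(n,t) = (−1)^n ∑_{k=n}^∞ (−λ)^k ∑_{(k_0,…,k_n) ∈ Ω^k_n} t^{∑_{j=0}^n k_j β_j} / Γ(1 + ∑_{j=0}^n k_j β_j). Then for every s > 0 such that s^{β_k} > λ for all 0 ≤ k ≤ n, the Laplace transform of q(n,·) satisfies ∫₀^∞ q(n,t) e^{−st} dt = λ^n s^{β_n − 1} / ∏_{k=0}^n (s^{β_k} + λ). -/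
open scoped BigOperators

/-- Riemann–Liouville fractional integral of order `α`. -/
noncomputable def rlInt (α : ℝ) (f : ℝ → ℝ) (t : ℝ) : ℝ :=
  (1 / Real.Gamma α) * ∫ s in (0:ℝ)..t, (t - s) ^ (α - 1) * f s

/-- `Theta n k` is the set of tuples `(k_0, …, k_n)` of nonnegative integers with
`k_0 + ⋯ + k_n = k` and `k_j ≥ 1` for `1 ≤ j ≤ n`. -/
def Theta (n k : ℕ) : Finset (Fin (n + 1) → ℕ) :=
  (Finset.Nat.antidiagonalTuple (n + 1) k).filter
    (fun κ => ∀ j : Fin (n + 1), 1 ≤ j.val → 1 ≤ κ j)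

/-- The state probabilities of SDTFPP-I (note that `Theta n k = ∅` for `k < n`,
so the series over all `k : ℕ` agrees with the series starting at `k = n`). -/
noncomputable def pI (lam : ℝ) (α : ℕ → ℝ) (n : ℕ) (t : ℝ) : ℝ :=
  (-1 : ℝ) ^ n * ∑' k : ℕ, (-lam) ^ k *
    ∑ κ ∈ Theta n k,
      t ^ (∑ j, (κ j : ℝ) * α j.val) / Real.Gamma (1 + ∑ j, (κ j : ℝ) * α j.val)
/-- `Omega n k` is the set of tuples `(k_0, …, k_n)` of nonnegative integers with
`k_0 + ⋯ + k_n = k` and `k_j ≥ 1` for `0 ≤ j ≤ n - 1` (`k_n` may be `0`). -/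
def Omega (n k : ℕ) : Finset (Fin (n + 1) → ℕ) :=
  (Finset.Nat.antidiagonalTuple (n + 1) k).filter
    (fun κ => ∀ j : Fin (n + 1), j.val < n → 1 ≤ κ j)

/-- The state probabilities of SDTFPP-II (note that `Omega n k = ∅` for `k < n`,
so the series over all `k : ℕ` agrees with the series starting at `k = n`). -/
noncomputable def qII (lam : ℝ) (β : ℕ → ℝ) (n : ℕ) (t : ℝ) : ℝ :=
  (-1 : ℝ) ^ n * ∑' k : ℕ, (-lam) ^ k *
    ∑ κ ∈ Omega n k,
      t ^ (∑ j, (κ j : ℝ) * β j.val) / Real.Gamma (1 + ∑ j, (κ j : ℝ) * β j.val)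


/-!
Termwise, `∫₀^∞ t^μ e^{-st} dt / Γ(1 + μ) = s^{-(1+μ)}`, so the `k`-th term of the series for
`q(n, ·)` transforms into `s⁻¹ ∑_{κ ∈ Ω^k_n} ∏ⱼ xⱼ^{κⱼ}` with `xⱼ = -λ s^{-βⱼ}`. Subtracting the
mandatory `1`s from `κ` (the tuple `omegaPad n`) identifies `⋃ₖ Ω^k_n` with `ℕ^{n+1}`, so summing
over `k` gives `(∏_{j<n} xⱼ) ∏_{j≤n} (1 - xⱼ)⁻¹`, a product of geometric series that converge
because `|xⱼ| < 1 ↔ λ < s^{βⱼ}`. The same computation with `λ` in place of `-λ` sums the integrals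
of the absolute values, which justifies exchanging the series and the integral.
-/

open MeasureTheory Set Finset

theorem summable_and_hasSum_prod_pow {𝕜 : Type*} [NormedField 𝕜] [CompleteSpace 𝕜] :
    ∀ {N : ℕ} (x : Fin N → 𝕜), (∀ j, ‖x j‖ < 1) →
      (Summable fun m : Fin N → ℕ => ‖∏ j, x j ^ m j‖) ∧
        HasSum (fun m : Fin N → ℕ => ∏ j, x j ^ m j) (∏ j, (1 - x j)⁻¹)
  | 0, x, _ => ⟨.of_finite, by simp⟩
  | N + 1, x, hx => by
    obtain ⟨ih_norm, ih⟩ := summable_and_hasSum_prod_pow (fun j => x j.succ) fun j => hx j.succ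
    have h_cons : ∀ p : ℕ × (Fin N → ℕ),
        ∏ j, x j ^ Fin.consEquiv (fun _ => ℕ) p j = x 0 ^ p.1 * ∏ j, x j.succ ^ p.2 j := by
      intro p
      simp [Fin.prod_univ_succ, Fin.consEquiv]
    have h_geom_norm : Summable fun a : ℕ => ‖x 0 ^ a‖ := by
      simpa [norm_pow] using summable_geometric_of_lt_one (norm_nonneg _) (hx 0)
    refine ⟨?_, ?_⟩
    · refine (Fin.consEquiv fun _ => ℕ).summable_iff.mp <|
        (h_geom_norm.mul_of_nonneg ih_norm (fun _ => norm_nonneg _) fun _ => norm_nonneg _).congr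
          fun p => ?_
      simp only [Function.comp_apply, h_cons, norm_mul]
    · have h_summ := summable_mul_of_summable_norm h_geom_norm ih_norm
      have h_prod : HasSum ((fun m : Fin (N + 1) → ℕ => ∏ j, x j ^ m j) ∘ Fin.consEquiv _)
          ((1 - x 0)⁻¹ * ∏ j : Fin N, (1 - x j.succ)⁻¹) := by
        simpa only [Function.comp_def, h_cons] using
          (hasSum_geometric_of_norm_lt_one (hx 0)).mul ih h_summ
      rw [Fin.prod_univ_succ]
      exact (Fin.consEquiv _).hasSum_iff.mp h_prod

def omegaPad (n : ℕ) : Fin (n + 1) → ℕ := fun j => if j.val < n then 1 else 0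

lemma mem_Omega {n k : ℕ} {κ : Fin (n + 1) → ℕ} :
    κ ∈ Omega n k ↔ ∑ j, κ j = k ∧ ∀ j : Fin (n + 1), j.val < n → 1 ≤ κ j := by
  simp [Omega, Finset.Nat.mem_antidiagonalTuple]

lemma add_omegaPad_mem_Omega (n : ℕ) (m : Fin (n + 1) → ℕ) :
    m + omegaPad n ∈ Omega n (∑ j, (m + omegaPad n) j) :=
  mem_Omega.mpr ⟨rfl, fun j hj => by simp [omegaPad, hj]⟩

lemma omegaPad_le_of_mem_Omega {n k : ℕ} {κ : Fin (n + 1) → ℕ} (hκ : κ ∈ Omega n k) :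
    omegaPad n ≤ κ := fun j => by
  unfold omegaPad
  split_ifs with hj
  exacts [(mem_Omega.mp hκ).2 j hj, Nat.zero_le _]

def omegaSigmaEquiv (n : ℕ) : (Fin (n + 1) → ℕ) ≃ Σ k, {κ // κ ∈ Omega n k} where
  toFun m := ⟨_, m + omegaPad n, add_omegaPad_mem_Omega n m⟩
  invFun p := p.2.1 - omegaPad n
  left_inv m := add_tsub_cancel_right m _
  right_inv := by
    rintro ⟨k, κ, hκ⟩
    have hκ' : κ - omegaPad n + omegaPad n = κ := tsub_add_cancel_of_le (omegaPad_le_of_mem_Omega hκ)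
    refine Sigma.subtype_ext ?_ hκ'
    simp only [hκ', (mem_Omega.mp hκ).1]

theorem hasSum_sum_Omega {α : Type*} [AddCommMonoid α] [TopologicalSpace α] [ContinuousAdd α]
    [RegularSpace α] {n : ℕ} (g : (Fin (n + 1) → ℕ) → α) {a : α}
    (h : HasSum (fun m => g (m + omegaPad n)) a) :
    HasSum (fun k => ∑ κ ∈ Omega n k, g κ) a :=
  HasSum.sigma (f := fun p : Σ k, {κ // κ ∈ Omega n k} => g p.2.1)
    ((omegaSigmaEquiv n).hasSum_iff.mp h) fun k => (Omega n k).hasSum g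

lemma prod_pow_omegaPad {M : Type*} [CommMonoid M] (n : ℕ) (x : ℕ → M) :
    ∏ j : Fin (n + 1), x j ^ omegaPad n j = ∏ i ∈ range n, x i := by
  simp [Fin.prod_univ_castSucc, omegaPad, Fin.prod_univ_eq_prod_range]

theorem hasSum_sum_Omega_prod_pow {𝕜 : Type*} [NormedField 𝕜] [CompleteSpace 𝕜] (n : ℕ)
    (x : ℕ → 𝕜) (hx : ∀ j ≤ n, ‖x j‖ < 1) :
    HasSum (fun k => ∑ κ ∈ Omega n k, ∏ j : Fin (n + 1), x j ^ κ j)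
      ((∏ i ∈ range n, x i) * ∏ i ∈ range (n + 1), (1 - x i)⁻¹) := by
  refine hasSum_sum_Omega _ ?_
  rw [← prod_pow_omegaPad, ← Fin.prod_univ_eq_prod_range (fun i => (1 - x i)⁻¹)]
  simpa [pow_add, prod_mul_distrib, mul_comm] using
    ((summable_and_hasSum_prod_pow (fun j : Fin (n + 1) => x j)
      fun j => hx j (Nat.lt_succ_iff.mp j.2)).2.mul_left (∏ j : Fin (n + 1), x j ^ omegaPad n j))

section Laplace

open Real

theorem integral_rpow_div_Gamma_mul_exp_neg_mul {μ s : ℝ} (hμ : -1 < μ) (hs : 0 < s) :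
    ∫ t in Ioi (0 : ℝ), t ^ μ / Gamma (1 + μ) * exp (-(s * t)) = s⁻¹ ^ (1 + μ) := by
  have hΓ : Gamma (1 + μ) ≠ 0 := (Gamma_pos_of_pos (by linarith)).ne'
  have h := integral_rpow_mul_exp_neg_mul_Ioi (a := 1 + μ) (by linarith) hs
  simp_rw [add_sub_cancel_left, one_div] at h
  simp_rw [div_mul_eq_mul_div, integral_div, h, mul_div_cancel_right₀ _ hΓ]

lemma integrableOn_rpow_mul_exp_neg_mul {μ s : ℝ} (hμ : -1 < μ) (hs : 0 < s) :
    IntegrableOn (fun t : ℝ => t ^ μ * exp (-(s * t))) (Ioi 0) := by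
  simpa [neg_mul] using integrableOn_rpow_mul_exp_neg_mul_rpow hμ one_pos hs

lemma pow_mul_rpow_one_add_sum {N k : ℕ} (κ : Fin N → ℕ) (hκ : ∑ j, κ j = k) (w : Fin N → ℝ)
    (c : ℝ) {r : ℝ} (hr : 0 < r) :
    c ^ k * r ^ (1 + ∑ j, (κ j : ℝ) * w j) = r * ∏ j, (c * r ^ w j) ^ κ j := by
  simp_rw [mul_pow, prod_mul_distrib, prod_pow_eq_pow_sum, hκ, rpow_add hr, rpow_one,
    rpow_sum_of_pos hr, ← rpow_natCast, ← rpow_mul hr.le, mul_comm (w _)]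
  ring

end Laplace

noncomputable def omegaSum (β : ℕ → ℝ) (n k : ℕ) (t : ℝ) : ℝ :=
  ∑ κ ∈ Omega n k, t ^ (∑ j, (κ j : ℝ) * β j.val) / Real.Gamma (1 + ∑ j, (κ j : ℝ) * β j.val)

lemma qII_eq_tsum_omegaSum (lam : ℝ) (β : ℕ → ℝ) (n : ℕ) (t : ℝ) :
    qII lam β n t = (-1) ^ n * ∑' k, (-lam) ^ k * omegaSum β n k t :=
  rfl

lemma sum_natCast_mul_nonneg {N : ℕ} {w : ℕ → ℝ} (hw : ∀ m, 0 ≤ w m) (κ : Fin N → ℕ) :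
    0 ≤ ∑ j, (κ j : ℝ) * w j.val :=
  sum_nonneg fun j _ => mul_nonneg (Nat.cast_nonneg _) (hw j)

section OmegaSum

open Real

variable {β : ℕ → ℝ} {n : ℕ} {s : ℝ}

lemma omegaSum_nonneg (hβ : ∀ m, 0 ≤ β m) (k : ℕ) {t : ℝ} (ht : 0 ≤ t) :
    0 ≤ omegaSum β n k t :=
  sum_nonneg fun κ _ => div_nonneg (rpow_nonneg ht _)
    (Gamma_nonneg_of_nonneg (by linarith [sum_natCast_mul_nonneg hβ κ]))

lemma integrableOn_omegaSum_mul_exp (hβ : ∀ m, 0 ≤ β m) (hs : 0 < s) (k : ℕ) :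
    IntegrableOn (fun t => omegaSum β n k t * exp (-(s * t))) (Ioi 0) := by
  simp_rw [omegaSum, sum_mul, div_mul_eq_mul_div]
  exact integrable_finsetSum _ fun κ _ =>
    (integrableOn_rpow_mul_exp_neg_mul (by linarith [sum_natCast_mul_nonneg hβ κ]) hs).div_const _

lemma integral_omegaSum_mul_exp (hβ : ∀ m, 0 ≤ β m) (hs : 0 < s) (k : ℕ) :
    ∫ t in Ioi (0 : ℝ), omegaSum β n k t * exp (-(s * t))
      = ∑ κ ∈ Omega n k, s⁻¹ ^ (1 + ∑ j, (κ j : ℝ) * β j.val) := by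
  simp_rw [omegaSum, sum_mul]
  rw [integral_finsetSum]
  · exact sum_congr rfl fun κ _ =>
      integral_rpow_div_Gamma_mul_exp_neg_mul (by linarith [sum_natCast_mul_nonneg hβ κ]) hs
  · intro κ _
    simp_rw [div_mul_eq_mul_div]
    exact (integrableOn_rpow_mul_exp_neg_mul (by linarith [sum_natCast_mul_nonneg hβ κ]) hs).div_const _

lemma integrableOn_pow_mul_omegaSum_mul_exp (hβ : ∀ m, 0 ≤ β m) (hs : 0 < s) (c : ℝ) (k : ℕ) :
    IntegrableOn (fun t => c ^ k * omegaSum β n k t * exp (-(s * t))) (Ioi 0) := by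
  simp_rw [mul_assoc]
  exact (integrableOn_omegaSum_mul_exp hβ hs k).const_mul (c ^ k)

theorem integral_pow_mul_omegaSum_mul_exp (hβ : ∀ m, 0 ≤ β m) (hs : 0 < s) (c : ℝ) (k : ℕ) :
    ∫ t in Ioi (0 : ℝ), c ^ k * omegaSum β n k t * exp (-(s * t))
      = s⁻¹ * ∑ κ ∈ Omega n k, ∏ j : Fin (n + 1), (c * s⁻¹ ^ β j) ^ κ j := by
  simp_rw [mul_assoc, integral_const_mul, integral_omegaSum_mul_exp hβ hs, mul_sum]
  exact sum_congr rfl fun κ hκ =>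
    pow_mul_rpow_one_add_sum κ (mem_Omega.mp hκ).1 (fun j => β j) c (inv_pos.mpr hs)

theorem hasSum_integral_pow_mul_omegaSum_mul_exp (hβ : ∀ m, 0 ≤ β m) (hs : 0 < s) {c : ℝ}
    (hc : ∀ j ≤ n, |c| < s ^ β j) :
    HasSum (fun k => ∫ t in Ioi (0 : ℝ), c ^ k * omegaSum β n k t * exp (-(s * t)))
      (s⁻¹ * ((∏ i ∈ range n, c * s⁻¹ ^ β i) *
        ∏ i ∈ range (n + 1), (1 - c * s⁻¹ ^ β i)⁻¹)) := by
  simp_rw [integral_pow_mul_omegaSum_mul_exp hβ hs]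
  refine (hasSum_sum_Omega_prod_pow n (fun i => c * s⁻¹ ^ β i) fun j hj => ?_).mul_left s⁻¹
  rw [norm_mul, Real.norm_eq_abs, norm_of_nonneg (rpow_nonneg (inv_nonneg.mpr hs.le) _),
    inv_rpow hs.le, ← div_eq_mul_inv, div_lt_one (rpow_pos_of_pos hs _)]
  exact hc j hj

theorem integral_tsum_pow_mul_omegaSum_mul_exp (hβ : ∀ m, 0 ≤ β m) (hs : 0 < s) {c : ℝ}
    (hc : ∀ j ≤ n, |c| < s ^ β j) :
    ∫ t in Ioi (0 : ℝ), ∑' k, c ^ k * omegaSum β n k t * exp (-(s * t))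
      = s⁻¹ * ((∏ i ∈ range n, c * s⁻¹ ^ β i) *
        ∏ i ∈ range (n + 1), (1 - c * s⁻¹ ^ β i)⁻¹) := by
  have h_norm : ∀ k, ∫ t in Ioi (0 : ℝ), ‖c ^ k * omegaSum β n k t * exp (-(s * t))‖
      = ∫ t in Ioi (0 : ℝ), |c| ^ k * omegaSum β n k t * exp (-(s * t)) := fun k =>
    setIntegral_congr_fun measurableSet_Ioi fun t ht => by
      rw [norm_mul, norm_mul, norm_pow, Real.norm_eq_abs,
        norm_of_nonneg (omegaSum_nonneg hβ k (le_of_lt ht)), norm_of_nonneg (exp_pos _).le]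
  have h_summable : Summable fun k =>
      ∫ t in Ioi (0 : ℝ), ‖c ^ k * omegaSum β n k t * exp (-(s * t))‖ := by
    simp_rw [h_norm]
    exact (hasSum_integral_pow_mul_omegaSum_mul_exp hβ hs (c := |c|) (by simpa using hc)).summable
  exact (hasSum_integral_of_summable_integral_norm
    (integrableOn_pow_mul_omegaSum_mul_exp hβ hs c) h_summable).unique
      (hasSum_integral_pow_mul_omegaSum_mul_exp hβ hs hc)

end OmegaSum

lemma neg_one_pow_mul_prod_mul_prod_inv {K : Type*} [Field K] (n : ℕ) (a : K) (z : ℕ → K)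
    (hz : ∀ i, z i ≠ 0) (hza : ∀ i, z i + a ≠ 0) :
    (-1) ^ n * ((∏ i ∈ range n, -a * (z i)⁻¹) * ∏ i ∈ range (n + 1), (1 - -a * (z i)⁻¹)⁻¹)
      = a ^ n * z n / ∏ i ∈ range (n + 1), (z i + a) := by
  have h_factor : ∀ i, (1 - -a * (z i)⁻¹)⁻¹ = z i / (z i + a) := fun i => by
    rw [neg_mul, sub_neg_eq_add]
    field_simp [hz i, hza i]
  calc (-1) ^ n * ((∏ i ∈ range n, -a * (z i)⁻¹) * ∏ i ∈ range (n + 1), (1 - -a * (z i)⁻¹)⁻¹)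
      = (∏ i ∈ range n, (-1) * (-a * (z i)⁻¹) * (z i / (z i + a))) * (z n / (z n + a)) := by
        simp_rw [h_factor, prod_range_succ _ n, prod_mul_distrib, prod_const, card_range]
        ring
    _ = (∏ i ∈ range n, a / (z i + a)) * (z n / (z n + a)) := by
        congr 1
        exact prod_congr rfl fun i _ => by field_simp [hz i]
    _ = a ^ n * z n / ∏ i ∈ range (n + 1), (z i + a) := by
        rw [prod_div_distrib, prod_const, card_range, prod_range_succ, div_mul_div_comm]

/-- Laplace transform of the state probabilities of SDTFPP-II. -/
theorem sdtfppII_laplace_transform (lam : ℝ) (hlam : 0 < lam)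
    (β : ℕ → ℝ) (hβ : ∀ m, 0 < β m ∧ β m ≤ 1)
    (n : ℕ) (s : ℝ) (hs : 0 < s) (hsk : ∀ k ≤ n, lam < s ^ β k) :
    ∫ t in Set.Ioi (0:ℝ), qII lam β n t * Real.exp (-(s * t))
      = lam ^ n * s ^ (β n - 1) / ∏ k ∈ Finset.range (n + 1), (s ^ β k + lam) := by
  have hz : ∀ i, 0 < s ^ β i := fun i => Real.rpow_pos_of_pos hs _
  have h_series : ∀ t, qII lam β n t * Real.exp (-(s * t))
      = (-1) ^ n * ∑' k, (-lam) ^ k * omegaSum β n k t * Real.exp (-(s * t)) := fun t => by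
    rw [qII_eq_tsum_omegaSum, mul_assoc, tsum_mul_right]
  have hc : ∀ j ≤ n, |-lam| < s ^ β j := by simpa [abs_of_pos hlam] using hsk
  simp_rw [h_series, integral_const_mul,
    integral_tsum_pow_mul_omegaSum_mul_exp (fun m => (hβ m).1.le) hs hc, Real.inv_rpow hs.le]
  rw [mul_left_comm, neg_one_pow_mul_prod_mul_prod_inv n lam _ (fun i => (hz i).ne')
    fun i => (add_pos (hz i) hlam).ne', Real.rpow_sub hs, Real.rpow_one]
  ring
end

section
/- Let n ≥ 1, let ν_1 = 1 and 0 < ν_j ≤ 1 for 2 ≤ j ≤ n, and let λ_1, …, λ_{n−1} > 0 with λ_n = 1. Define f(t) = (−1)^{n−1} λ_1 ∑_{k=n−1}^∞ (−1)^k ∑_{(k_1,…,k_n) ∈ Λ^k_n} ( t^{k_1 + ∑_{j=2}^n k_j ν_j} ∏_{j=1}^{n−1} λ_j^{k_j} ) / Γ(1 + k_1 + ∑_{j=2}^n k_j ν_j) for t ≥ 0. Then for every s > 0 such that s > λ_1 and s^{ν_j} > λ_j for 2 ≤ j ≤ n−1 and s^{ν_n} > 1, ∫₀^∞ e^{−st}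 f(t) dt = ∏_{j=1}^{n−1} λ_j / ∏_{j=1}^n (λ_j + s^{ν_j}); that is, f is the density of the convolution W = Y_1 + ⋯ + Y_n of independent Mittag-Leffler random variables Y_j with Pr{Y_j > t} = E_{ν_j}(−λ_j t^{ν_j}). -/
open scoped BigOperators

/-- `Lambda n k` is the set of tuples `(k_1, …, k_n)` of nonnegative integers with
`k_1 + ⋯ + k_n = k` and `k_j ≥ 1` for `2 ≤ j ≤ n` (`k_1` may be `0`); the coordinate
`j : Fin n` represents the index `j + 1 ∈ {1, …, n}`. -/
def Lambda (n k : ℕ) : Finset (Fin n → ℕ) :=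
  (Finset.Nat.antidiagonalTuple n k).filter
    (fun κ => ∀ j : Fin n, 1 ≤ j.val → 1 ≤ κ j)

/-!
Termwise, `∫₀^∞ e^{-st} t^a / Γ(1 + a) dt = s^{-(1+a)}`, so the `κ`-th monomial of the series
transforms into `s⁻¹ ∏_j w_j^{κ_j}` with `w_j = -λ_j / s^{ν_j}`, and the conditions on `s` say
exactly that `|w_j| < 1`. Running over `k` and `κ ∈ Λ^k_n` is running over all tuples with
`κ_j ≥ 1` for `j ≥ 2`, so the double series is a product of geometric series,
`(1 - w_1)⁻¹ ∏_{j ≥ 2} w_j / (1 - w_j)`. The same computation with `|λ_j|` in place of `λ_j`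
bounds `∑_k ∫ |k-th term|`, which justifies integrating the series term by term.
-/

open Finset MeasureTheory Set Real

section PiProduct

variable {R ι : Type*} [NormedCommRing R]

theorem summable_norm_prod_pi {N : ℕ} {f : Fin N → ι → R}
    (hf : ∀ j, Summable fun q => ‖f j q‖) : Summable fun κ : Fin N → ι => ‖∏ j, f j (κ j)‖ := by
  induction N with
  | zero => exact .of_finite
  | succ N ih =>
    have hf0 := hf 0
    refine (Fin.consEquiv fun _ => ι).summable_iff.1 <|
      (hf0.mul_norm (ih fun j => hf j.succ)).congr fun p => ?_
    simp [Fin.prod_univ_succ]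

theorem hasSum_prod_pi [CompleteSpace R] {N : ℕ} {f : Fin N → ι → R}
    (hf : ∀ j, Summable fun q => ‖f j q‖) :
    HasSum (fun κ : Fin N → ι => ∏ j, f j (κ j)) (∏ j, ∑' q, f j q) := by
  induction N with
  | zero => simp
  | succ N ih =>
    have hf0 := hf 0
    have hmul := summable_mul_of_summable_norm hf0 (summable_norm_prod_pi fun j => hf j.succ)
    have hprod := hf0.of_norm.hasSum.mul (ih fun j => hf j.succ) hmul
    rw [Fin.prod_univ_succ]
    refine (Fin.consEquiv fun _ => ι).hasSum_iff.1 (hprod.congr_fun fun p => ?_)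
    simp [Fin.prod_univ_succ]

end PiProduct

theorem HasSum.sum_antidiagonalTuple {M : Type*} [AddCommMonoid M] [TopologicalSpace M]
    [ContinuousAdd M] [RegularSpace M] {n : ℕ} {G : (Fin n → ℕ) → M} {a : M}
    (h : HasSum G a) : HasSum (fun k => ∑ κ ∈ Nat.antidiagonalTuple n k, G κ) a :=
  ((Nat.sigmaAntidiagonalTupleEquivTuple n).hasSum_iff.2 h).sigma fun k =>
    (Nat.antidiagonalTuple n k).hasSum G

section Geometric

variable {𝕜 : Type*} [NormedField 𝕜]

theorem hasSum_ite_imp_pow (p : Prop) [Decidable p] {w : 𝕜} (hw : ‖w‖ < 1) :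
    HasSum (fun q : ℕ => if p → 1 ≤ q then w ^ q else 0) ((if p then w else 1) / (1 - w)) := by
  have hgeom := hasSum_geometric_of_norm_lt_one hw
  by_cases hp : p
  · refine (hasSum_nat_add_iff' 1).1 ?_
    simpa [hp, pow_succ', div_eq_mul_inv] using hgeom.mul_left w
  · simpa [hp] using hgeom

theorem sum_Lambda_prod_pow {n : ℕ} (w : Fin n → 𝕜) (k : ℕ) :
    ∑ κ ∈ Lambda n k, ∏ j, w j ^ κ j =
      ∑ κ ∈ Nat.antidiagonalTuple n k, ∏ j, if 1 ≤ j.val → 1 ≤ κ j then w j ^ κ j else 0 := by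
  simp_rw [Lambda, sum_filter, Fintype.prod_ite_zero]
  congr!

theorem hasSum_sum_Lambda_prod_pow [CompleteSpace 𝕜] {n : ℕ} (w : Fin n → 𝕜)
    (hw : ∀ j, ‖w j‖ < 1) :
    HasSum (fun k => ∑ κ ∈ Lambda n k, ∏ j, w j ^ κ j)
      (∏ j, (if 1 ≤ j.val then w j else 1) / (1 - w j)) := by
  have hnorm : ∀ j : Fin n, Summable fun q : ℕ => ‖if 1 ≤ j.val → 1 ≤ q then w j ^ q else 0‖ :=
    fun j => (hasSum_ite_imp_pow (1 ≤ j.val) (w := ‖w j‖) (by simpa using hw j)).summable.congr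
      fun q => by split_ifs <;> simp
  simp_rw [sum_Lambda_prod_pow, ← fun j => (hasSum_ite_imp_pow (1 ≤ j.val) (hw j)).tsum_eq]
  exact (hasSum_prod_pi hnorm).sum_antidiagonalTuple

end Geometric

theorem sum_eq_of_mem_Lambda {n k : ℕ} {κ : Fin n → ℕ} (h : κ ∈ Lambda n k) : ∑ j, κ j = k :=
  Nat.mem_antidiagonalTuple.1 (mem_filter.1 h).1

theorem integral_exp_neg_mul_mul_rpow {s a : ℝ} (hs : 0 < s) (ha : -1 < a) :
    ∫ t in Ioi 0, exp (-(s * t)) * t ^ a = Gamma (a + 1) / s ^ (a + 1) := by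
  have h := integral_rpow_mul_exp_neg_mul_Ioi (a := a + 1) (by linarith) hs
  rw [add_sub_cancel_right, one_div, inv_rpow hs.le] at h
  simp_rw [mul_comm (exp _)]
  rw [h, div_eq_inv_mul]

theorem integrableOn_exp_neg_mul_mul_rpow {s a : ℝ} (hs : 0 < s) (ha : -1 < a) :
    IntegrableOn (fun t => exp (-(s * t)) * t ^ a) (Ioi 0) := by
  refine Integrable.of_integral_ne_zero ?_
  rw [integral_exp_neg_mul_mul_rpow hs ha]
  exact (div_pos (Gamma_pos_of_pos (by linarith)) (rpow_pos_of_pos hs _)).ne'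

theorem rpow_sum_natCast_mul {ι : Type*} [Fintype ι] {s : ℝ} (hs : 0 < s) (κ : ι → ℕ)
    (ν : ι → ℝ) : s ^ (∑ j, (κ j : ℝ) * ν j) = ∏ j, (s ^ ν j) ^ κ j := by
  rw [rpow_sum_of_pos hs]
  exact prod_congr rfl fun j _ => by rw [mul_comm, rpow_mul_natCast hs.le]

namespace MittagLeffler

noncomputable def monomial {n : ℕ} (ν lam : Fin n → ℝ) (κ : Fin n → ℕ) (t : ℝ) : ℝ :=
  (t ^ (∑ j, (κ j : ℝ) * ν j) * ∏ j, lam j ^ κ j) / Gamma (1 + ∑ j, (κ j : ℝ) * ν j)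

variable {n : ℕ} {ν : Fin n → ℝ} {s : ℝ}

theorem exponent_nonneg (hν : ∀ j, 0 ≤ ν j) (κ : Fin n → ℕ) : 0 ≤ ∑ j, (κ j : ℝ) * ν j :=
  sum_nonneg fun j _ => mul_nonneg (Nat.cast_nonneg _) (hν j)

theorem neg_one_pow_mul_monomial (lam : Fin n → ℝ) {k : ℕ} {κ : Fin n → ℕ}
    (hκ : ∑ j, κ j = k) (t : ℝ) : (-1) ^ k * monomial ν lam κ t = monomial ν (-lam) κ t := by
  simp only [monomial, Pi.neg_apply, neg_pow (lam _), prod_mul_distrib, prod_pow_eq_pow_sum, hκ]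
  ring

theorem abs_monomial (lam : Fin n → ℝ) (hν : ∀ j, 0 ≤ ν j) (κ : Fin n → ℕ) {t : ℝ}
    (ht : 0 ≤ t) : |monomial ν lam κ t| = monomial ν |lam| κ t := by
  have hΓ : 0 < Gamma (1 + ∑ j, (κ j : ℝ) * ν j) :=
    Gamma_pos_of_pos (by linarith [exponent_nonneg hν κ])
  simp only [monomial, abs_div, abs_mul, abs_of_pos hΓ, abs_of_nonneg (rpow_nonneg ht _),
    abs_prod, abs_pow, Pi.abs_apply]

theorem exp_mul_monomial (lam : Fin n → ℝ) (κ : Fin n → ℕ) (t : ℝ) :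
    exp (-(s * t)) * monomial ν lam κ t =
      (∏ j, lam j ^ κ j) / Gamma (1 + ∑ j, (κ j : ℝ) * ν j) *
        (exp (-(s * t)) * t ^ (∑ j, (κ j : ℝ) * ν j)) := by
  rw [monomial]
  ring

theorem integrableOn_exp_mul_monomial (lam : Fin n → ℝ) (hν : ∀ j, 0 ≤ ν j) (hs : 0 < s)
    (κ : Fin n → ℕ) : IntegrableOn (fun t => exp (-(s * t)) * monomial ν lam κ t) (Ioi 0) := by
  simp_rw [exp_mul_monomial]
  exact (integrableOn_exp_neg_mul_mul_rpow hs (by linarith [exponent_nonneg hν κ])).const_mul _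

theorem integral_exp_mul_monomial (lam : Fin n → ℝ) (hν : ∀ j, 0 ≤ ν j) (hs : 0 < s)
    (κ : Fin n → ℕ) :
    ∫ t in Ioi 0, exp (-(s * t)) * monomial ν lam κ t = s⁻¹ * ∏ j, (lam j / s ^ ν j) ^ κ j := by
  have hA := exponent_nonneg hν κ
  have hΓ : Gamma (1 + ∑ j, (κ j : ℝ) * ν j) ≠ 0 := (Gamma_pos_of_pos (by linarith)).ne'
  simp_rw [exp_mul_monomial, integral_const_mul, integral_exp_neg_mul_mul_rpow hs (by linarith),
    rpow_add hs, rpow_one, rpow_sum_natCast_mul hs, div_pow, prod_div_distrib,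
    add_comm _ (1 : ℝ)]
  field_simp

theorem integrableOn_exp_mul_sum_monomial (lam : Fin n → ℝ) (hν : ∀ j, 0 ≤ ν j) (hs : 0 < s)
    (S : Finset (Fin n → ℕ)) :
    IntegrableOn (fun t => exp (-(s * t)) * ∑ κ ∈ S, monomial ν lam κ t) (Ioi 0) := by
  simp_rw [mul_sum]
  exact integrable_finsetSum _ fun κ _ => integrableOn_exp_mul_monomial lam hν hs κ

theorem integral_exp_mul_sum_monomial (lam : Fin n → ℝ) (hν : ∀ j, 0 ≤ ν j) (hs : 0 < s)
    (S : Finset (Fin n → ℕ)) :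
    ∫ t in Ioi 0, exp (-(s * t)) * ∑ κ ∈ S, monomial ν lam κ t =
      s⁻¹ * ∑ κ ∈ S, ∏ j, (lam j / s ^ ν j) ^ κ j := by
  simp_rw [mul_sum]
  rw [integral_finsetSum _ fun κ _ => integrableOn_exp_mul_monomial lam hν hs κ]
  exact sum_congr rfl fun κ _ => integral_exp_mul_monomial lam hν hs κ

theorem integral_norm_exp_mul_sum_monomial_le (lam : Fin n → ℝ) (hν : ∀ j, 0 ≤ ν j)
    (hs : 0 < s) (S : Finset (Fin n → ℕ)) :
    ∫ t in Ioi 0, ‖exp (-(s * t)) * ∑ κ ∈ S, monomial ν lam κ t‖ ≤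
      s⁻¹ * ∑ κ ∈ S, ∏ j, (|lam j| / s ^ ν j) ^ κ j := by
  refine (setIntegral_mono_on (integrableOn_exp_mul_sum_monomial lam hν hs S).norm
    (integrableOn_exp_mul_sum_monomial |lam| hν hs S) measurableSet_Ioi fun t ht => ?_).trans_eq
    (integral_exp_mul_sum_monomial |lam| hν hs S)
  rw [norm_mul, norm_of_nonneg (exp_pos _).le]
  gcongr
  refine (norm_sum_le _ _).trans_eq (sum_congr rfl fun κ _ => ?_)
  exact abs_monomial lam hν κ (le_of_lt ht)

theorem integral_exp_mul_tsum_sum_Lambda_monomial (lam : Fin n → ℝ) (hν : ∀ j, 0 ≤ ν j)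
    (hs : 0 < s) (hlam : ∀ j, |lam j| < s ^ ν j) :
    ∫ t in Ioi 0, exp (-(s * t)) * ∑' k, ∑ κ ∈ Lambda n k, monomial ν lam κ t =
      s⁻¹ * ∏ j, (if 1 ≤ j.val then lam j / s ^ ν j else 1) / (1 - lam j / s ^ ν j) := by
  have hw : ∀ j, |lam j| / s ^ ν j < 1 := fun j => (div_lt_one (rpow_pos_of_pos hs _)).2 (hlam j)
  have hsum := hasSum_sum_Lambda_prod_pow (fun j => lam j / s ^ ν j) fun j => by
    simpa [abs_div, abs_of_pos (rpow_pos_of_pos hs (ν j))] using hw j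
  have habs := hasSum_sum_Lambda_prod_pow (fun j => |lam j| / s ^ ν j) fun j => by
    simpa [abs_div, abs_of_pos (rpow_pos_of_pos hs (ν j))] using hw j
  have hnorm : Summable fun k => ∫ t in Ioi 0,
      ‖exp (-(s * t)) * ∑ κ ∈ Lambda n k, monomial ν lam κ t‖ :=
    (habs.summable.mul_left s⁻¹).of_nonneg_of_le (fun k => integral_nonneg fun t => norm_nonneg _)
      fun k => integral_norm_exp_mul_sum_monomial_le lam hν hs _
  simp_rw [← tsum_mul_left]
  rw [← integral_tsum_of_summable_integral_norm
    (fun k => integrableOn_exp_mul_sum_monomial lam hν hs _) hnorm]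
  simp_rw [integral_exp_mul_sum_monomial lam hν hs]
  exact (hsum.mul_left s⁻¹).tsum_eq

theorem integral_exp_mul_tsum_neg_one_pow_mul_sum_Lambda_monomial {lam : Fin n → ℝ}
    (hν : ∀ j, 0 ≤ ν j) (hs : 0 < s) (hlam : ∀ j, |lam j| < s ^ ν j) :
    ∫ t in Ioi 0, exp (-(s * t)) * ∑' k, (-1) ^ k * ∑ κ ∈ Lambda n k, monomial ν lam κ t =
      s⁻¹ * ∏ j, (if 1 ≤ j.val then -lam j else s ^ ν j) / (lam j + s ^ ν j) := by
  have hsign : ∀ k t, (-1) ^ k * ∑ κ ∈ Lambda n k, monomial ν lam κ t =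
      ∑ κ ∈ Lambda n k, monomial ν (-lam) κ t := fun k t => by
    rw [mul_sum]
    exact sum_congr rfl fun κ hκ => neg_one_pow_mul_monomial lam (sum_eq_of_mem_Lambda hκ) t
  simp_rw [hsign]
  rw [integral_exp_mul_tsum_sum_Lambda_monomial (-lam) hν hs (by simpa using hlam)]
  congr 1
  refine prod_congr rfl fun j _ => ?_
  have hc := rpow_pos_of_pos hs (ν j)
  have hlc : 0 < lam j + s ^ ν j := by linarith [neg_abs_le (lam j), hlam j]
  rw [Pi.neg_apply, neg_div, sub_neg_eq_add, add_comm, div_add_one hc.ne', div_div_eq_mul_div]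
  split_ifs <;> field_simp

end MittagLeffler

theorem prod_Icc_one_eq_prod_fin {M : Type*} [CommMonoid M] (f : ℕ → M) (N : ℕ) :
    ∏ j ∈ Icc 1 N, f j = ∏ j : Fin N, f (j + 1) := by
  rw [Fin.prod_univ_eq_prod_range (fun j => f (j + 1)), range_eq_Ico, prod_Ico_add' f 0 N 1,
    zero_add, Finset.Ico_add_one_right_eq_Icc]

theorem neg_one_pow_mul_mul_prod_ite_div (m : ℕ) (a c : ℕ → ℝ) :
    (-1) ^ m * a 1 *
        ∏ j : Fin (m + 1), (if 1 ≤ j.val then -a (j + 1) else c (j + 1)) / (a (j + 1) + c (j + 1)) =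
      c 1 * (∏ j ∈ Icc 1 (m + 1), a j) / ∏ j ∈ Icc 1 (m + 1), (a j + c j) := by
  have hnum : ∏ j : Fin (m + 1), (if 1 ≤ j.val then -a (j + 1) else c (j + 1)) =
      c 1 * ((-1) ^ m * ∏ j : Fin m, a (j + 2)) := by
    simp [Fin.prod_univ_succ, prod_neg]
  have ha : ∏ j : Fin (m + 1), a (j + 1) = a 1 * ∏ j : Fin m, a (j + 2) := by
    simp [Fin.prod_univ_succ]
  have hsign : ((-1 : ℝ) ^ m) * (-1) ^ m = 1 := by rw [← mul_pow]; norm_num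
  rw [prod_div_distrib, hnum, prod_Icc_one_eq_prod_fin, ha, prod_Icc_one_eq_prod_fin]
  linear_combination (c 1 * a 1 * ∏ j : Fin m, a (j + 2)) /
    (∏ j : Fin (m + 1), (a (j + 1) + c (j + 1))) * hsign
/-- The density of the convolution of `n` independent Mittag-Leffler random variables
of orders `ν_1 = 1, ν_2, …, ν_n` and rates `λ_1, …, λ_{n−1}, λ_n = 1` has Laplace
transform `∏_{j=1}^{n−1} λ_j / ∏_{j=1}^n (λ_j + s^{ν_j})`.  (Since `ν_1 = 1` and
`λ_n = 1`, the exponent `k_1 + ∑_{j=2}^n k_j ν_j` equals `∑_{j=1}^n k_j ν_j` and the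
product `∏_{j=1}^{n−1} λ_j^{k_j}` equals `∏_{j=1}^n λ_j^{k_j}`.) -/
theorem convolution_mittagLeffler_birth_laplace (n : ℕ) (hn : 1 ≤ n)
    (ν : ℕ → ℝ) (hν1 : ν 1 = 1) (hν : ∀ j, 2 ≤ j → j ≤ n → 0 < ν j ∧ ν j ≤ 1)
    (lam : ℕ → ℝ) (hlam : ∀ j, 1 ≤ j → j ≤ n - 1 → 0 < lam j) (hlamn : lam n = 1) :
    ∀ s : ℝ, 0 < s → lam 1 < s →
      (∀ j, 2 ≤ j → j ≤ n - 1 → lam j < s ^ ν j) → 1 < s ^ ν n →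
      ∫ t in Set.Ioi (0:ℝ),
          Real.exp (-(s * t)) *
            ((-1 : ℝ) ^ (n - 1) * lam 1 * ∑' k : ℕ, (-1 : ℝ) ^ k *
              ∑ κ ∈ Lambda n k,
                (t ^ (∑ j, (κ j : ℝ) * ν (j.val + 1)) *
                    ∏ j, lam (j.val + 1) ^ (κ j))
                  / Real.Gamma (1 + ∑ j, (κ j : ℝ) * ν (j.val + 1)))
        = (∏ j ∈ Finset.Icc 1 (n - 1), lam j)
            / ∏ j ∈ Finset.Icc 1 n, (lam j + s ^ ν j) := by
  intro s hs hs1 hsmid hsn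
  obtain ⟨m, rfl⟩ : ∃ m, n = m + 1 := ⟨n - 1, by omega⟩
  rw [Nat.add_sub_cancel] at hlam hsmid ⊢
  have hν_nonneg : ∀ i, 1 ≤ i → i ≤ m + 1 → 0 ≤ ν i := fun i hi him => by
    rcases eq_or_lt_of_le hi with rfl | h2
    · simp [hν1]
    · exact (hν i h2 him).1.le
  have hlam_lt : ∀ i, 1 ≤ i → i ≤ m + 1 → |lam i| < s ^ ν i := fun i hi him => by
    rcases eq_or_lt_of_le him with rfl | hlt
    · simpa [hlamn] using hsn
    rw [abs_of_pos (hlam i hi (by omega))]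
    rcases eq_or_lt_of_le hi with rfl | h2
    · simpa [hν1] using hs1
    · exact hsmid i h2 (by omega)
  have hν_fin : ∀ j : Fin (m + 1), 0 ≤ ν (j + 1) := fun j => hν_nonneg _ (by omega) (by omega)
  have hlam_fin : ∀ j : Fin (m + 1), |lam (j + 1)| < s ^ ν (j + 1) :=
    fun j => hlam_lt _ (by omega) (by omega)
  calc _ = (-1) ^ m * lam 1 * ∫ t in Ioi 0, exp (-(s * t)) * ∑' k, (-1) ^ k *
        ∑ κ ∈ Lambda (m + 1) k,
          MittagLeffler.monomial (fun j => ν (j + 1)) (fun j => lam (j + 1)) κ t := by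
        rw [← integral_const_mul]
        refine setIntegral_congr_fun measurableSet_Ioi fun t _ => ?_
        simp only [MittagLeffler.monomial]
        ring
    _ = _ := by
      rw [MittagLeffler.integral_exp_mul_tsum_neg_one_pow_mul_sum_Lambda_monomial hν_fin hs
        hlam_fin, ← mul_assoc, mul_right_comm, neg_one_pow_mul_mul_prod_ite_div m lam (s ^ ν ·),
        prod_Icc_succ_top (by omega), hlamn, mul_one, hν1, rpow_one]
      field_simp
end

section
/- Let (λ_n)_{n≥1} be positive reals and let 0 < ν ≤ 1. For n ≥ 1 and t ≥ 0 define p(n,t) = (−1)^{n−1} (λ_1/λ_n) ∑_{k=n−1}^∞ ( (−1)^k t^{kν} / Γ(kν + 1) ) ∑_{(k_1,…,k_n) ∈ Λ^k_n} ∏_{j=1}^n λ_j^{k_j}, and set p(0,t) = 0. Then for every n ≥ 1 and every t ≥ 0, p(n,t) = [n=1] + (I^{ν}_t ( −λ_n p(n,·) + λ_{n−1} p(n−1,·) ))(t), where [n=1] equals 1 if n = 1 and 0 otherwise; that is, when ν_n = ν for all n, the state probabilities of SDFPBP reduce to those of the fractional pure birth process. -/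
open scoped BigOperators

/-- The state probabilities of the state dependent fractional pure birth process
(note that `Lambda n k = ∅` for `k < n - 1`, so the series over all `k : ℕ` agrees
with the series starting at `k = n - 1`). -/
noncomputable def rBirth (lam : ℕ → ℝ) (ν : ℕ → ℝ) (n : ℕ) (t : ℝ) : ℝ :=
  (-1 : ℝ) ^ (n - 1) * (lam 1 / lam n) * ∑' k : ℕ, (-1 : ℝ) ^ k *
    ∑ κ ∈ Lambda n k,
      (t ^ (∑ j, (κ j : ℝ) * ν (j.val + 1)) * ∏ j, lam (j.val + 1) ^ (κ j)) /
        Real.Gamma (1 + ∑ j, (κ j : ℝ) * ν (j.val + 1))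

/-- The state probabilities of the fractional pure birth process (FPBP), obtained
from SDFPBP with a constant fractional order `ν_n = ν`. -/
noncomputable def pFPBP (lam : ℕ → ℝ) (ν : ℝ) (n : ℕ) (t : ℝ) : ℝ :=
  (-1 : ℝ) ^ (n - 1) * (lam 1 / lam n) * ∑' k : ℕ,
    ((-1 : ℝ) ^ k * t ^ ((k : ℝ) * ν) / Real.Gamma ((k : ℝ) * ν + 1)) *
      ∑ κ ∈ Lambda n k, ∏ j, lam (j.val + 1) ^ (κ j)

/-!
Write `p(n, t) = ∑ₖ aₙ(k) t^{kν} / Γ(kν + 1)`. Because of the Beta integral, `I^ν` sends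
`t^β / Γ(β + 1)` to `t^{β+ν} / Γ(β + ν + 1)`, so after integrating termwise the integral
equation says exactly `aₙ(0) = [n = 1]` and `aₙ(k + 1) = -λₙ aₙ(k) + λₙ₋₁ aₙ₋₁(k)`.
The recursion comes from splitting `Λ^{k+1}_n` according to whether `kₙ = 1` (drop the
last entry, landing in `Λ^k_{n-1}`) or `kₙ ≥ 2` (lower it by one, landing in `Λ^k_n`).
The same recursion shows that the coefficients grow at most geometrically, and together with
`Γ(s + 1) ≥ R^s e^{-R}` this justifies the termwise integration.
-/

open Real Set MeasureTheory

lemma rpow_mul_exp_neg_le_Gamma_add_one {s R : ℝ} (hs : 0 ≤ s) (hR : 0 ≤ R) :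
    R ^ s * exp (-R) ≤ Gamma (s + 1) := by
  have hint : IntegrableOn (fun x => exp (-x) * x ^ s) (Ioi 0) := by
    simpa using GammaIntegral_convergent (s := s + 1) (by linarith)
  rw [Gamma_eq_integral (by linarith), add_sub_cancel_right]
  calc R ^ s * exp (-R) = ∫ x in Ioi R, R ^ s * exp (-x) := by
        rw [integral_const_mul, integral_exp_neg_Ioi]
    _ ≤ ∫ x in Ioi R, exp (-x) * x ^ s := by
        refine setIntegral_mono_on ?_ (hint.mono_set (Ioi_subset_Ioi hR)) measurableSet_Ioi
          fun x hx => ?_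
        · exact (integrableOn_exp_neg_Ioi R).const_mul _
        · rw [mul_comm]
          exact mul_le_mul_of_nonneg_left (rpow_le_rpow hR (le_of_lt hx) hs) (exp_pos _).le
    _ ≤ ∫ x in Ioi 0, exp (-x) * x ^ s :=
        setIntegral_mono_set hint
          ((ae_restrict_iff' measurableSet_Ioi).mpr (ae_of_all _ fun x (hx : 0 < x) =>
            mul_nonneg (exp_pos _).le (rpow_nonneg hx.le s)))
          (Ioi_subset_Ioi hR).eventuallyLE

lemma summable_pow_div_Gamma_mul_add_one {ν x : ℝ} (hν : 0 < ν) (hx : 0 ≤ x) :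
    Summable fun k : ℕ => x ^ k / Gamma (k * ν + 1) := by
  set R := (x + 1) ^ ν⁻¹
  have hR : 0 ≤ R := by positivity
  have hratio : x / (x + 1) < 1 := (div_lt_one (by linarith)).mpr (by linarith)
  refine Summable.of_nonneg_of_le (fun k => by positivity) (fun k => ?_)
    ((summable_geometric_of_lt_one (by positivity) hratio).mul_left (exp R))
  have hRk : R ^ ((k : ℝ) * ν) = (x + 1) ^ k := by
    rw [← rpow_mul (by linarith), mul_comm, mul_assoc, mul_inv_cancel₀ hν.ne', mul_one,
      rpow_natCast]
  have hΓ := rpow_mul_exp_neg_le_Gamma_add_one (by positivity : 0 ≤ (k : ℝ) * ν) hR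
  rw [hRk] at hΓ
  rw [div_pow, div_le_iff₀ (by positivity)]
  calc x ^ k = exp R * (x ^ k / (x + 1) ^ k) * ((x + 1) ^ k * exp (-R)) := by
        rw [exp_neg]; field_simp
    _ ≤ _ := by gcongr

lemma integral_rpow_mul_rpow_sub {a b t : ℝ} (ha : 0 < a) (hb : 0 < b) (ht : 0 < t) :
    ∫ s in (0:ℝ)..t, s ^ (a - 1) * (t - s) ^ (b - 1)
      = Gamma a * Gamma b / Gamma (a + b) * t ^ (a + b - 1) := by
  have hC := Complex.betaIntegral_scaled a b ht
  rw [Complex.betaIntegral_eq_Gamma_mul_div _ _ (by simpa using ha) (by simpa using hb)] at hC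
  have hcoe : ∀ s ∈ uIcc 0 t, ((s : ℂ) ^ ((a : ℂ) - 1) * ((t : ℂ) - s) ^ ((b : ℂ) - 1))
      = ((s ^ (a - 1) * (t - s) ^ (b - 1) : ℝ) : ℂ) := by
    intro s hs
    rw [uIcc_of_le ht.le] at hs
    rw [Complex.ofReal_mul, Complex.ofReal_cpow hs.1, Complex.ofReal_cpow (sub_nonneg.mpr hs.2)]
    push_cast
    ring
  rw [intervalIntegral.integral_congr hcoe, intervalIntegral.integral_ofReal,
    ← Complex.ofReal_add, ← Complex.ofReal_one, ← Complex.ofReal_sub, ← Complex.ofReal_cpow ht.le,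
    Complex.Gamma_ofReal, Complex.Gamma_ofReal, Complex.Gamma_ofReal] at hC
  apply Complex.ofReal_injective
  rw [hC]
  push_cast
  ring

lemma intervalIntegrable_rpow_mul_rpow_sub {b c : ℝ} (hb : 0 < b) (hc : 0 ≤ c) (t : ℝ) :
    IntervalIntegrable (fun s => s ^ c * (t - s) ^ (b - 1)) volume 0 t := by
  have hsub : IntervalIntegrable (fun s : ℝ => (t - s) ^ (b - 1)) volume 0 t := by
    simpa using ((intervalIntegral.intervalIntegrable_rpow' (a := 0) (b := t)
      (r := b - 1) (by linarith)).comp_sub_left t).symm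
  exact hsub.continuousOn_mul (continuousOn_id.rpow_const fun _ _ => Or.inr hc)

noncomputable def rpowDivGamma (β t : ℝ) : ℝ := t ^ β / Gamma (β + 1)

lemma rpowDivGamma_nonneg {β t : ℝ} (hβ : -1 < β) (ht : 0 ≤ t) : 0 ≤ rpowDivGamma β t :=
  div_nonneg (rpow_nonneg ht _) (Gamma_pos_of_pos (by linarith)).le

lemma rlInt_const_mul (α c : ℝ) (f : ℝ → ℝ) (t : ℝ) :
    rlInt α (fun s => c * f s) t = c * rlInt α f t := by
  simp only [rlInt, mul_left_comm _ c, intervalIntegral.integral_const_mul]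

lemma rlInt_congr {α t : ℝ} (ht : 0 ≤ t) {f g : ℝ → ℝ} (h : ∀ s ∈ Icc 0 t, f s = g s) :
    rlInt α f t = rlInt α g t := by
  unfold rlInt
  congr 1
  refine intervalIntegral.integral_congr fun s hs => ?_
  rw [uIcc_of_le ht] at hs
  simp only [h s hs]

lemma rlInt_rpowDivGamma {α β t : ℝ} (hα : 0 < α) (hβ : -1 < β) (ht : 0 < t) :
    rlInt α (rpowDivGamma β) t = rpowDivGamma (α + β) t := by
  have hΓα := (Gamma_pos_of_pos hα).ne'
  have hΓβ := (Gamma_pos_of_pos (by linarith : 0 < β + 1)).ne'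
  have hΓ := (Gamma_pos_of_pos (by linarith : 0 < β + 1 + α)).ne'
  have key := integral_rpow_mul_rpow_sub (by linarith : 0 < β + 1) hα ht
  have hint : ∫ s in (0:ℝ)..t, (t - s) ^ (α - 1) * (s ^ β / Gamma (β + 1))
      = (Gamma (β + 1))⁻¹ * ∫ s in (0:ℝ)..t, s ^ (β + 1 - 1) * (t - s) ^ (α - 1) := by
    rw [← intervalIntegral.integral_const_mul]
    congr 1 with s
    rw [add_sub_cancel_right]
    ring
  simp only [rlInt, rpowDivGamma]
  rw [hint, key, add_comm α β,
    show β + 1 + α - 1 = β + α by ring, show β + 1 + α = β + α + 1 by ring]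
  field_simp

lemma rlInt_tsum {α t : ℝ} (hα : 0 < α) (ht : 0 ≤ t) {f : ℕ → ℝ → ℝ}
    (hint : ∀ k, IntervalIntegrable (fun s => (t - s) ^ (α - 1) * f k s) volume 0 t)
    (hsum : Summable fun k => rlInt α (fun s => |f k s|) t) :
    rlInt α (fun s => ∑' k, f k s) t = ∑' k, rlInt α (f k) t := by
  have hΓ := (Gamma_pos_of_pos hα).ne'
  have hnorm : ∀ k, ∫ s in Ioc 0 t, ‖(t - s) ^ (α - 1) * f k s‖
      = Gamma α * rlInt α (fun s => |f k s|) t := by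
    intro k
    rw [rlInt, ← mul_assoc, mul_one_div_cancel hΓ, one_mul, intervalIntegral.integral_of_le ht]
    refine setIntegral_congr_fun measurableSet_Ioc fun s hs => ?_
    rw [norm_mul, Real.norm_eq_abs, abs_of_nonneg (rpow_nonneg (sub_nonneg.mpr hs.2) _),
      Real.norm_eq_abs]
  simp only [rlInt, intervalIntegral.integral_of_le ht, ← tsum_mul_left]
  rw [tsum_mul_left, ← integral_tsum_of_summable_integral_norm
    (fun k => (intervalIntegrable_iff_integrableOn_Ioc_of_le ht).mp (hint k))
    (by simpa only [hnorm] using hsum.mul_left (Gamma α))]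

noncomputable def mittagLefflerSeries (ν : ℝ) (a : ℕ → ℝ) (t : ℝ) : ℝ :=
  ∑' k : ℕ, a k * rpowDivGamma (k * ν) t

def GeomBounded (a : ℕ → ℝ) : Prop :=
  ∃ A D : ℝ, 1 ≤ D ∧ ∀ k, |a k| ≤ A * D ^ k

namespace GeomBounded

variable {a b : ℕ → ℝ}

lemma abs (ha : GeomBounded a) : GeomBounded fun k => |a k| := by
  simpa only [GeomBounded, abs_abs] using ha

lemma comp_succ (ha : GeomBounded a) : GeomBounded fun k => a (k + 1) := by
  obtain ⟨A, D, hD, haD⟩ := ha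
  exact ⟨A * D, D, hD, fun k => (haD (k + 1)).trans_eq (by ring)⟩

lemma of_succ_eq {L M : ℝ} (hb : GeomBounded b) (h : ∀ k, a (k + 1) = L * a k + M * b k) :
    GeomBounded a := by
  obtain ⟨A, D, hD, hbD⟩ := hb
  have hA : 0 ≤ A := by simpa using (abs_nonneg _).trans (hbD 0)
  set A' := |a 0| + |M| * A
  set D' := |L| + 1 + D
  have hMA : |M| * A ≤ A' := le_add_of_nonneg_left (abs_nonneg _)
  have hDD' : D ≤ D' := by linarith [abs_nonneg L]
  refine ⟨A', D', by linarith, fun k => ?_⟩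
  induction k with
  | zero => simpa [A'] using mul_nonneg (abs_nonneg M) hA
  | succ k ih =>
    have hD'k : 0 ≤ A' * D' ^ k := mul_nonneg (hMA.trans' (by positivity)) (by positivity)
    calc |a (k + 1)| ≤ |L| * |a k| + |M| * |b k| := by
          rw [h, ← abs_mul, ← abs_mul]; exact abs_add_le _ _
      _ ≤ |L| * (A' * D' ^ k) + |M| * A * D' ^ k := by
          rw [mul_assoc]
          gcongr
          exact (hbD k).trans (by gcongr)
      _ ≤ |L| * (A' * D' ^ k) + A' * D' ^ k := by gcongr
      _ ≤ A' * D' ^ (k + 1) := by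
          rw [pow_succ]
          nlinarith

lemma summable_mul_rpowDivGamma (ha : GeomBounded a) {ν t : ℝ} (hν : 0 < ν) (ht : 0 ≤ t)
    (m : ℕ) : Summable fun k : ℕ => a k * rpowDivGamma ((k + m) * ν) t := by
  obtain ⟨A, D, hD, haD⟩ := ha
  have hgeom := ((summable_nat_add_iff m).mpr
    (summable_pow_div_Gamma_mul_add_one hν
      (mul_nonneg (by linarith) (by positivity) : 0 ≤ D * t ^ ν))).mul_left A
  refine hgeom.of_norm_bounded fun k => ?_
  have hΓ : 0 < Gamma ((k + m) * ν + 1) := Gamma_pos_of_pos (by positivity)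
  have hpow : t ^ ((k + m) * ν) = (t ^ ν) ^ (k + m) := by
    rw [← rpow_natCast, ← rpow_mul ht]; push_cast; ring_nf
  have hA : 0 ≤ A := by simpa using (abs_nonneg _).trans (haD 0)
  rw [Real.norm_eq_abs, abs_mul, rpowDivGamma, abs_of_nonneg (div_nonneg (rpow_nonneg ht _) hΓ.le),
    hpow]
  calc |a k| * ((t ^ ν) ^ (k + m) / Gamma ((k + m) * ν + 1))
      ≤ (A * D ^ (k + m)) * ((t ^ ν) ^ (k + m) / Gamma ((k + m) * ν + 1)) := by
        gcongr
        exact (haD k).trans (mul_le_mul_of_nonneg_left (pow_le_pow_right₀ hD (by omega)) hA)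
    _ = A * ((D * t ^ ν) ^ (k + m) / Gamma (↑(k + m) * ν + 1)) := by push_cast; ring

end GeomBounded

section mittagLefflerSeries

variable {ν t : ℝ} {a b : ℕ → ℝ}

lemma rlInt_mittagLefflerSeries (hν : 0 < ν) (ht : 0 < t) (ha : GeomBounded a) :
    rlInt ν (mittagLefflerSeries ν a) t = ∑' k : ℕ, a k * rpowDivGamma ((k + 1) * ν) t := by
  have hk : ∀ k : ℕ, -1 < (k : ℝ) * ν := fun k => by linarith [mul_nonneg k.cast_nonneg hν.le]
  have hterm : ∀ (k : ℕ) (c : ℝ), rlInt ν (fun s => c * rpowDivGamma (k * ν) s) t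
      = c * rpowDivGamma ((k + 1) * ν) t := by
    intro k c
    rw [rlInt_const_mul, rlInt_rpowDivGamma hν (hk k) ht]
    ring_nf
  have hint : ∀ k : ℕ, IntervalIntegrable
      (fun s => (t - s) ^ (ν - 1) * (a k * rpowDivGamma (k * ν) s)) volume 0 t := by
    intro k
    refine ((intervalIntegrable_rpow_mul_rpow_sub (c := k * ν) hν (by positivity) t).const_mul
      (a k / Gamma (k * ν + 1))).congr fun s _ => ?_
    simp only [rpowDivGamma]
    ring
  have habs : ∀ k : ℕ, rlInt ν (fun s => |a k * rpowDivGamma (k * ν) s|) t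
      = |a k| * rpowDivGamma ((k + 1) * ν) t := by
    intro k
    rw [← hterm, rlInt_congr ht.le fun s hs => by
      rw [abs_mul, abs_of_nonneg (rpowDivGamma_nonneg (hk k) hs.1)]]
  unfold mittagLefflerSeries
  rw [rlInt_tsum hν ht.le hint ?_]
  · exact tsum_congr fun k => hterm k (a k)
  · simpa only [habs, Nat.cast_one] using ha.abs.summable_mul_rpowDivGamma hν ht.le 1

lemma mittagLefflerSeries_zero_right (hν : 0 < ν) : mittagLefflerSeries ν a 0 = a 0 := by
  rw [mittagLefflerSeries, tsum_eq_single 0 fun k hk => ?_]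
  · simp [rpowDivGamma]
  · rw [rpowDivGamma, zero_rpow (by positivity), zero_div, mul_zero]

lemma mittagLefflerSeries_eq_add_rlInt (hν : 0 < ν) (ht : 0 ≤ t) (ha : GeomBounded a) :
    mittagLefflerSeries ν a t = a 0 + rlInt ν (mittagLefflerSeries ν fun k => a (k + 1)) t := by
  rcases ht.eq_or_lt with rfl | ht
  · simp [mittagLefflerSeries_zero_right hν, rlInt]
  rw [rlInt_mittagLefflerSeries hν ht ha.comp_succ, mittagLefflerSeries,
    (by simpa using ha.summable_mul_rpowDivGamma hν ht.le 0 :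
      Summable fun k : ℕ => a k * rpowDivGamma (k * ν) t).tsum_eq_zero_add]
  simp [rpowDivGamma]

lemma mittagLefflerSeries_add_mul (hν : 0 < ν) (ht : 0 ≤ t) (ha : GeomBounded a)
    (hb : GeomBounded b) (L M : ℝ) :
    mittagLefflerSeries ν (fun k => L * a k + M * b k) t
      = L * mittagLefflerSeries ν a t + M * mittagLefflerSeries ν b t := by
  have hsum : ∀ {c : ℕ → ℝ}, GeomBounded c →
      Summable fun k : ℕ => c k * rpowDivGamma (k * ν) t :=
    fun hc => by simpa using hc.summable_mul_rpowDivGamma hν ht 0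
  simp only [mittagLefflerSeries, add_mul, mul_assoc]
  rw [((hsum ha).mul_left L).tsum_add ((hsum hb).mul_left M), tsum_mul_left, tsum_mul_left]

end mittagLefflerSeries

lemma mem_Lambda {n k : ℕ} {κ : Fin n → ℕ} :
    κ ∈ Lambda n k ↔ ∑ j, κ j = k ∧ ∀ j : Fin n, 1 ≤ j.val → 1 ≤ κ j := by
  simp [Lambda, Finset.Nat.mem_antidiagonalTuple]

noncomputable def lambdaWeight (lam : ℕ → ℝ) (n k : ℕ) : ℝ :=
  ∑ κ ∈ Lambda n k, ∏ j, lam (j.val + 1) ^ κ j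

lemma lambdaWeight_one (lam : ℕ → ℝ) (k : ℕ) : lambdaWeight lam 1 k = lam 1 ^ k := by
  have : Lambda 1 k = {fun _ => k} := by
    ext κ
    simp only [mem_Lambda, Finset.mem_singleton, Fin.forall_fin_one, Fin.val_zero,
      Fin.sum_univ_one]
    exact ⟨fun h => funext fun j => by rw [Subsingleton.elim j 0, h.1],
      fun h => ⟨by rw [h], by omega⟩⟩
  simp [lambdaWeight, this]

lemma lambdaWeight_zero (lam : ℕ → ℝ) {n : ℕ} (hn : 2 ≤ n) : lambdaWeight lam n 0 = 0 := by
  have : Lambda n 0 = ∅ := by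
    refine Finset.eq_empty_of_forall_notMem fun κ hκ => ?_
    rw [mem_Lambda, Finset.sum_eq_zero_iff] at hκ
    have := hκ.2 ⟨1, hn⟩ le_rfl
    simp_all
  simp [lambdaWeight, this]

lemma sum_Lambda_filter_last_eq_one (lam : ℕ → ℝ) (m k : ℕ) :
    ∑ κ ∈ (Lambda (m + 1) (k + 1)).filter (fun κ => κ (Fin.last m) = 1),
        ∏ j, lam (j.val + 1) ^ κ j
      = lam (m + 1) * lambdaWeight lam m k := by
  rw [lambdaWeight, Finset.mul_sum]
  refine Finset.sum_nbij' Fin.init (fun κ => Fin.snoc κ 1) ?_ ?_ ?_ ?_ ?_ <;>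
    intro κ hκ <;>
    simp only [Finset.mem_filter, mem_Lambda, Fin.init_def,
      Fin.sum_univ_castSucc, Fin.prod_univ_castSucc, Fin.forall_fin_succ', Fin.val_castSucc,
      Fin.val_last, Fin.snoc_castSucc, Fin.snoc_last] at hκ ⊢
  · exact ⟨by simpa [hκ.2] using hκ.1.1, fun j hj => hκ.1.2.1 j hj⟩
  · exact ⟨⟨by rw [hκ.1], hκ.2, fun _ => le_rfl⟩, trivial⟩
  · ext j
    induction j using Fin.lastCases <;> simp [hκ.2]
  · rw [hκ.2, pow_one, mul_comm]

lemma sum_Lambda_filter_last_ne_one (lam : ℕ → ℝ) {m : ℕ} (hm : 1 ≤ m) (k : ℕ) :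
    ∑ κ ∈ (Lambda (m + 1) (k + 1)).filter (fun κ => κ (Fin.last m) ≠ 1),
        ∏ j, lam (j.val + 1) ^ κ j
      = lam (m + 1) * lambdaWeight lam (m + 1) k := by
  rw [lambdaWeight, Finset.mul_sum]
  refine Finset.sum_nbij' (fun κ => κ - Pi.single (Fin.last m) 1)
    (fun κ => κ + Pi.single (Fin.last m) 1) ?_ ?_ ?_ ?_ ?_ <;>
    intro κ hκ <;>
    simp only [Finset.mem_filter, mem_Lambda, Fin.sum_univ_castSucc, Fin.prod_univ_castSucc,
      Fin.forall_fin_succ', Fin.val_castSucc, Fin.val_last, Pi.add_apply, Pi.sub_apply,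
      Pi.single_eq_same, Pi.single_eq_of_ne (Fin.castSucc_ne_last _), add_zero,
      tsub_zero] at hκ ⊢
  · obtain ⟨⟨hsum, hpos, hlast⟩, hne⟩ := hκ
    have := hlast hm
    exact ⟨by omega, hpos, fun _ => by omega⟩
  · exact ⟨⟨by omega, hκ.2.1, fun _ => by omega⟩, by omega⟩
  · ext j
    induction j using Fin.lastCases <;> simp [Nat.sub_add_cancel (hκ.1.2.2 hm)]
  · exact add_tsub_cancel_right κ _
  · rw [mul_left_comm, ← pow_succ', Nat.sub_add_cancel (hκ.1.2.2 hm)]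

lemma lambdaWeight_succ_succ (lam : ℕ → ℝ) {m : ℕ} (hm : 1 ≤ m) (k : ℕ) :
    lambdaWeight lam (m + 1) (k + 1)
      = lam (m + 1) * (lambdaWeight lam (m + 1) k + lambdaWeight lam m k) := by
  rw [lambdaWeight, ← Finset.sum_filter_not_add_sum_filter _ (fun κ => κ (Fin.last m) = 1),
    sum_Lambda_filter_last_ne_one lam hm, sum_Lambda_filter_last_eq_one, mul_add]

noncomputable def fpbpCoeff (lam : ℕ → ℝ) (n k : ℕ) : ℝ :=
  (-1) ^ (n - 1) * (lam 1 / lam n) * ((-1) ^ k * lambdaWeight lam n k)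

lemma pFPBP_eq_mittagLefflerSeries (lam : ℕ → ℝ) (ν : ℝ) (n : ℕ) (t : ℝ) :
    pFPBP lam ν n t = mittagLefflerSeries ν (fpbpCoeff lam n) t := by
  rw [pFPBP, mittagLefflerSeries, ← tsum_mul_left]
  congr 1 with k
  rw [fpbpCoeff, lambdaWeight, rpowDivGamma]
  ring

lemma fpbpCoeff_zero {lam : ℕ → ℝ} (hlam : lam 1 ≠ 0) {n : ℕ} (hn : 1 ≤ n) :
    fpbpCoeff lam n 0 = if n = 1 then 1 else 0 := by
  split_ifs with h
  · simp [h, fpbpCoeff, lambdaWeight_one, hlam]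
  · simp [fpbpCoeff, lambdaWeight_zero lam (by omega : 2 ≤ n)]

lemma fpbpCoeff_succ {lam : ℕ → ℝ} (hlam : ∀ m, 1 ≤ m → lam m ≠ 0) {n : ℕ} (hn : 1 ≤ n)
    (k : ℕ) :
    fpbpCoeff lam n (k + 1)
      = -lam n * fpbpCoeff lam n k
        + lam (n - 1) * (if n = 1 then 0 else fpbpCoeff lam (n - 1) k) := by
  obtain rfl | ⟨m, rfl⟩ : n = 1 ∨ ∃ m, n = m + 2 := by
    rcases Nat.exists_eq_add_of_le' hn with ⟨m, rfl⟩; cases m <;> simp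
  · simp only [fpbpCoeff, lambdaWeight_one, if_true]
    ring
  · have h1 := hlam (m + 1) (by omega)
    have h2 := hlam (m + 2) (by omega)
    simp only [fpbpCoeff, lambdaWeight_succ_succ lam (by omega : 1 ≤ m + 1), Nat.add_sub_cancel,
      show m + 2 - 1 = m + 1 by omega, show m + 2 ≠ 1 by omega, if_false]
    field_simp
    ring

lemma geomBounded_fpbpCoeff {lam : ℕ → ℝ} (hlam : ∀ m, 1 ≤ m → lam m ≠ 0) {n : ℕ}
    (hn : 1 ≤ n) : GeomBounded (fpbpCoeff lam n) := by
  induction n, hn using Nat.le_induction with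
  | base => exact GeomBounded.of_succ_eq ⟨0, 1, le_rfl, by simp⟩ (fpbpCoeff_succ hlam le_rfl)
  | succ n hn ih =>
    exact GeomBounded.of_succ_eq (by simpa [Nat.one_le_iff_ne_zero.mp hn] using ih)
      (fpbpCoeff_succ hlam (by omega))

theorem fpbp_integral_equation_general (lam : ℕ → ℝ) (hlam : ∀ m, 1 ≤ m → 0 < lam m)
    (ν : ℝ) (hν0 : 0 < ν)
    (n : ℕ) (hn : 1 ≤ n) (t : ℝ) (ht : 0 ≤ t) :
    pFPBP lam ν n t
      = (if n = 1 then (1:ℝ) else 0)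
        + rlInt ν
            (fun u => -(lam n) * pFPBP lam ν n u
              + lam (n - 1) * (if n = 1 then (0:ℝ) else pFPBP lam ν (n - 1) u)) t := by
  have hlam' : ∀ m, 1 ≤ m → lam m ≠ 0 := fun m hm => (hlam m hm).ne'
  have ha := geomBounded_fpbpCoeff hlam' hn
  have hb : GeomBounded fun k => if n = 1 then 0 else fpbpCoeff lam (n - 1) k := by
    split_ifs
    exacts [⟨0, 1, le_rfl, by simp⟩, geomBounded_fpbpCoeff hlam' (by omega)]
  rw [pFPBP_eq_mittagLefflerSeries, mittagLefflerSeries_eq_add_rlInt hν0 ht ha,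
    fpbpCoeff_zero (hlam' 1 le_rfl) hn]
  congr 1
  refine rlInt_congr ht fun u hu => ?_
  have hprev : (if n = 1 then 0 else pFPBP lam ν (n - 1) u)
      = mittagLefflerSeries ν (fun k => if n = 1 then 0 else fpbpCoeff lam (n - 1) k) u := by
    split_ifs <;> simp [mittagLefflerSeries, pFPBP_eq_mittagLefflerSeries]
  rw [hprev, pFPBP_eq_mittagLefflerSeries, ← mittagLefflerSeries_add_mul hν0 hu.1 ha hb]
  simp only [fpbpCoeff_succ hlam' hn]

/-- The FPBP state probabilities solve the governing integral equations of SDFPBP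
with constant order `ν`. -/
theorem fpbp_integral_equation (lam : ℕ → ℝ) (hlam : ∀ m, 1 ≤ m → 0 < lam m)
    (ν : ℝ) (hν0 : 0 < ν) (hν1 : ν ≤ 1)
    (n : ℕ) (hn : 1 ≤ n) (t : ℝ) (ht : 0 ≤ t) :
    pFPBP lam ν n t
      = (if n = 1 then (1:ℝ) else 0)
        + rlInt ν
            (fun u => -(lam n) * pFPBP lam ν n u
              + lam (n - 1) * (if n = 1 then (0:ℝ) else pFPBP lam ν (n - 1) u)) t :=
  fpbp_integral_equation_general lam hlam ν hν0 n hn t ht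
end
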